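/- Let N = N(s_0 | a_1/b_1, …, a_m/b_m) be an n×n star-shaped intersection matrix built from an integer s_0 ≥ 1 and m ≥ 3 Hirzebruch–Jung chain matrices N_1, …, N_m with associated data (a_j, b_j, R_j). Let p ≥ 2 be an integer. If a_j = p for all j = 1, …, m and p·s_0 − Σ_{j=1}^m b_j = 1, then the discriminant group Φ_N is killed by p and has order p^{m−1}. -/

import Mathlib

/-!
Let `Q` be an abelian group and `f : StarVertex ℓ → Q` with `N f = 0`. The rows of the chain `N_j`
away from the node force `f = c_j • R_j` along the `j`-th arm, where `c_j` is the value at `w_j`;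
the row of the first vertex of arm `j` then gives `f v₀ = p • c_j`, and `p` times the node row
reads `(p s₀ - ∑ b_j) • f v₀ = 0`. Hence `f v₀ = 0`, `p • c_j = 0` and `∑ b_j • c_j = 0`, and
conversely every such `c` comes from a unique `f`.

As `N` is symmetric, the images in `Φ_N` of the standard basis vectors form such an `f` with
`Q = Φ_N`, so `p` kills `Φ_N`. Then `Φ_N` is the cokernel of `N` modulo `p`, which has the order of
its kernel `{c : (ℤ/p)^m | ∑ b_j c_j = 0}`; since `∑ b_j ≡ -1 mod p`, this order is `p^(m-1)`.
-/

open Matrix BigOperators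

def Matrix.IsUnitUpperHessenberg {n : ℕ} (T : Matrix (Fin n) (Fin n) ℤ) : Prop :=
  ∀ i k : Fin n, k < i → T i k = if (i : ℕ) = k + 1 then 1 else 0

theorem Matrix.IsUnitUpperHessenberg.eq_zero_of_sum_smul_eq_zero {Q : Type*} [AddCommGroup Q]
    {L : ℕ} {T : Matrix (Fin (L + 1)) (Fin (L + 1)) ℤ} (hT : T.IsUnitUpperHessenberg)
    {w : Fin (L + 1) → Q} (hrow : ∀ i, i ≠ 0 → ∑ k, T i k • w k = 0)
    (hlast : w (Fin.last L) = 0) : w = 0 := by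
  suffices h : ∀ i : Fin (L + 1), ∀ k, i ≤ k → w k = 0 from funext fun k => h k k le_rfl
  intro i
  induction i using Fin.reverseInduction with
  | last => intro k hk; rwa [Fin.last_le_iff.mp hk]
  | cast i ih =>
    intro k hk
    rcases hk.lt_or_eq with hlt | rfl
    · exact ih k (Fin.castSucc_lt_iff_succ_le.mp hlt)
    · have hrow_succ := hrow i.succ i.succ_ne_zero
      rwa [Finset.sum_eq_single i.castSucc, hT _ _ i.castSucc_lt_succ, if_pos (by simp), one_smul]
        at hrow_succ
      · intro k _ hk
        rcases lt_or_gt_of_ne hk with hk | hk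
        · rw [hT _ _ (hk.trans i.castSucc_lt_succ), if_neg, zero_smul]
          rw [Fin.lt_def] at hk
          simp only [Fin.val_succ, Fin.val_castSucc] at hk ⊢
          omega
        · rw [ih k (Fin.castSucc_lt_iff_succ_le.mp hk), smul_zero]
      · simp

section Tridiagonal

variable {n : ℕ} {T : Matrix (Fin n) (Fin n) ℤ}

theorem Matrix.isSymm_of_tridiagonal
    (hadj : ∀ i k : Fin n, ((i : ℕ) + 1 = k ∨ (k : ℕ) + 1 = i) → T i k = 1)
    (hoff : ∀ i k : Fin n, i ≠ k → (i : ℕ) + 1 ≠ k → (k : ℕ) + 1 ≠ i → T i k = 0) :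
    T.IsSymm := by
  refine Matrix.IsSymm.ext fun i k => ?_
  by_cases hik : i = k
  · rw [hik]
  by_cases hnear : (i : ℕ) + 1 = k ∨ (k : ℕ) + 1 = i
  · rw [hadj i k hnear, hadj k i hnear.symm]
  · rw [not_or] at hnear
    rw [hoff i k hik hnear.1 hnear.2, hoff k i (Ne.symm hik) hnear.2 hnear.1]

theorem Matrix.isUnitUpperHessenberg_of_tridiagonal
    (hadj : ∀ i k : Fin n, ((i : ℕ) + 1 = k ∨ (k : ℕ) + 1 = i) → T i k = 1)
    (hoff : ∀ i k : Fin n, i ≠ k → (i : ℕ) + 1 ≠ k → (k : ℕ) + 1 ≠ i → T i k = 0) :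
    T.IsUnitUpperHessenberg := fun i k hki => by
  rw [Fin.lt_def] at hki
  split_ifs with h
  · exact hadj i k (Or.inr h.symm)
  · exact hoff i k (Fin.ne_of_gt hki) (by omega) (by omega)

end Tridiagonal

theorem Matrix.sum_smul_smul_eq_mulVec_smul {S Q ι κ : Type*} [Semiring S] [AddCommMonoid Q]
    [Module S Q] [Fintype κ] (A : Matrix ι κ S) (v : κ → S) (c : Q) (i : ι) :
    ∑ k, A i k • v k • c = (A *ᵥ v) i • c := by
  simp only [smul_smul, ← Finset.sum_smul]
  rfl

/-- `none` is the node `v₀`, and `some ⟨j, i⟩` the `i`-th vertex of the `j`-th arm, counted from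
the node, so that `some ⟨j, Fin.last (ℓ j)⟩` is the terminal vertex `w_j`. -/
abbrev StarVertex {m : ℕ} (ℓ : Fin m → ℕ) := Option ((j : Fin m) × Fin (ℓ j + 1))

structure IsStarMatrix {m : ℕ} {ℓ : Fin m → ℕ} (N : Matrix (StarVertex ℓ) (StarVertex ℓ) ℤ)
    (s : ℤ) (M : ∀ j, Matrix (Fin (ℓ j + 1)) (Fin (ℓ j + 1)) ℤ) : Prop where
  node : N none none = -s
  node_arm : ∀ j i, N none (some ⟨j, i⟩) = if i = 0 then 1 else 0
  arm_node : ∀ j i, N (some ⟨j, i⟩) none = if i = 0 then 1 else 0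
  arm : ∀ j i i', N (some ⟨j, i⟩) (some ⟨j, i'⟩) = M j i i'
  arm_ne : ∀ j j' i i', j ≠ j' → N (some ⟨j, i⟩) (some ⟨j', i'⟩) = 0

def armVector {Q : Type*} [AddCommGroup Q] {m : ℕ} {ℓ : Fin m → ℕ}
    (R : ∀ j, Fin (ℓ j + 1) → ℤ) (c : Fin m → Q) : StarVertex ℓ → Q
  | none => 0
  | some ⟨j, i⟩ => R j i • c j

namespace IsStarMatrix

variable {Q : Type*} [AddCommGroup Q] {m : ℕ} {ℓ : Fin m → ℕ}
  {N : Matrix (StarVertex ℓ) (StarVertex ℓ) ℤ} {s : ℤ}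
  {M : ∀ j, Matrix (Fin (ℓ j + 1)) (Fin (ℓ j + 1)) ℤ}

theorem transpose (hN : IsStarMatrix N s M) : IsStarMatrix Nᵀ s fun j => (M j)ᵀ :=
  ⟨hN.node, hN.arm_node, hN.node_arm, fun j i i' => hN.arm j i' i,
    fun j j' i i' h => hN.arm_ne j' j i' i h.symm⟩

theorem sum_smul_none (hN : IsStarMatrix N s M) (f : StarVertex ℓ → Q) :
    ∑ y, N none y • f y = -s • f none + ∑ j, f (some ⟨j, 0⟩) := by
  rw [Fintype.sum_option, Fintype.sum_sigma, hN.node]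
  simp [hN.node_arm, ite_smul]

theorem sum_smul_some (hN : IsStarMatrix N s M) (f : StarVertex ℓ → Q) (j : Fin m)
    (i : Fin (ℓ j + 1)) :
    ∑ y, N (some ⟨j, i⟩) y • f y =
      (if i = 0 then f none else 0) + ∑ k, M j i k • f (some ⟨j, k⟩) := by
  rw [Fintype.sum_option, Fintype.sum_sigma, hN.arm_node, ite_smul, one_smul, zero_smul,
    Finset.sum_eq_single j]
  · simp only [hN.arm]
  · intro j' _ hj
    simp [hN.arm_ne j j' i _ (Ne.symm hj)]
  · simp

variable {R : ∀ j, Fin (ℓ j + 1) → ℤ} {p : ℤ} {f : StarVertex ℓ → Q}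

theorem apply_some_eq_smul_last (hN : IsStarMatrix N s M)
    (hM : ∀ j, (M j).IsUnitUpperHessenberg)
    (hR : ∀ j, M j *ᵥ R j = fun i => if i = 0 then -p else 0)
    (hRlast : ∀ j, R j (Fin.last (ℓ j)) = 1) (hf : ∀ x, ∑ y, N x y • f y = 0)
    (j : Fin m) (i : Fin (ℓ j + 1)) :
    f (some ⟨j, i⟩) = R j i • f (some ⟨j, Fin.last (ℓ j)⟩) := by
  set c := f (some ⟨j, Fin.last (ℓ j)⟩)
  suffices h : (fun k => f (some ⟨j, k⟩) - R j k • c) = 0 from sub_eq_zero.mp (congrFun h i)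
  refine (hM j).eq_zero_of_sum_smul_eq_zero (fun k hk => ?_) (by simp [c, hRlast])
  have hrow := hf (some ⟨j, k⟩)
  rw [hN.sum_smul_some, if_neg hk, zero_add] at hrow
  simp only [smul_sub, Finset.sum_sub_distrib, hrow, Matrix.sum_smul_smul_eq_mulVec_smul, hR,
    if_neg hk, zero_smul, sub_zero]

theorem node_eq_smul_last (hN : IsStarMatrix N s M)
    (hM : ∀ j, (M j).IsUnitUpperHessenberg)
    (hR : ∀ j, M j *ᵥ R j = fun i => if i = 0 then -p else 0)
    (hRlast : ∀ j, R j (Fin.last (ℓ j)) = 1) (hf : ∀ x, ∑ y, N x y • f y = 0) (j : Fin m) :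
    f none = p • f (some ⟨j, Fin.last (ℓ j)⟩) := by
  have hrow := hf (some ⟨j, 0⟩)
  rw [hN.sum_smul_some, if_pos rfl, Finset.sum_congr rfl fun k _ => by
    rw [hN.apply_some_eq_smul_last hM hR hRlast hf j k], Matrix.sum_smul_smul_eq_mulVec_smul,
    hR] at hrow
  simpa only [if_true, neg_smul, ← sub_eq_add_neg, sub_eq_zero] using hrow

theorem node_eq_zero (hN : IsStarMatrix N s M)
    (hM : ∀ j, (M j).IsUnitUpperHessenberg)
    (hR : ∀ j, M j *ᵥ R j = fun i => if i = 0 then -p else 0)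
    (hRlast : ∀ j, R j (Fin.last (ℓ j)) = 1) (hrel : p * s - ∑ j, R j 0 = 1)
    (hf : ∀ x, ∑ y, N x y • f y = 0) : f none = 0 := by
  have hrow := hf none
  rw [hN.sum_smul_none, Finset.sum_congr rfl fun j _ =>
    hN.apply_some_eq_smul_last hM hR hRlast hf j 0] at hrow
  have hscaled : p • (-s • f none + ∑ j, R j 0 • f (some ⟨j, Fin.last (ℓ j)⟩)) =
      -((p * s - ∑ j, R j 0) • f none) := by
    simp only [smul_add, Finset.smul_sum, smul_comm p (R _ 0),
      ← hN.node_eq_smul_last hM hR hRlast hf, smul_smul, sub_smul, Finset.sum_smul, smul_neg,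
      neg_smul, neg_sub]
    abel
  rw [hrow, hrel, one_smul, smul_zero] at hscaled
  exact neg_eq_zero.mp hscaled.symm

theorem eq_armVector (hN : IsStarMatrix N s M)
    (hM : ∀ j, (M j).IsUnitUpperHessenberg)
    (hR : ∀ j, M j *ᵥ R j = fun i => if i = 0 then -p else 0)
    (hRlast : ∀ j, R j (Fin.last (ℓ j)) = 1) (hrel : p * s - ∑ j, R j 0 = 1)
    (hf : ∀ x, ∑ y, N x y • f y = 0) :
    f = armVector R fun j => f (some ⟨j, Fin.last (ℓ j)⟩) := by
  funext x
  rcases x with _ | ⟨j, i⟩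
  · exact hN.node_eq_zero hM hR hRlast hrel hf
  · exact hN.apply_some_eq_smul_last hM hR hRlast hf j i

theorem smul_eq_zero_of_sum_smul_eq_zero (hN : IsStarMatrix N s M)
    (hM : ∀ j, (M j).IsUnitUpperHessenberg)
    (hR : ∀ j, M j *ᵥ R j = fun i => if i = 0 then -p else 0)
    (hRlast : ∀ j, R j (Fin.last (ℓ j)) = 1) (hrel : p * s - ∑ j, R j 0 = 1)
    (hf : ∀ x, ∑ y, N x y • f y = 0) : p • f = 0 := by
  rw [hN.eq_armVector hM hR hRlast hrel hf]
  funext x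
  rcases x with _ | ⟨j, i⟩
  · exact smul_zero p
  · rw [Pi.smul_apply, armVector, smul_comm, ← hN.node_eq_smul_last hM hR hRlast hf,
      hN.node_eq_zero hM hR hRlast hrel hf, smul_zero, Pi.zero_apply]

theorem sum_smul_last_eq_zero (hN : IsStarMatrix N s M)
    (hM : ∀ j, (M j).IsUnitUpperHessenberg)
    (hR : ∀ j, M j *ᵥ R j = fun i => if i = 0 then -p else 0)
    (hRlast : ∀ j, R j (Fin.last (ℓ j)) = 1) (hrel : p * s - ∑ j, R j 0 = 1)
    (hf : ∀ x, ∑ y, N x y • f y = 0) :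
    ∑ j, R j 0 • f (some ⟨j, Fin.last (ℓ j)⟩) = 0 := by
  have hrow := hf none
  rwa [hN.sum_smul_none, hN.node_eq_zero hM hR hRlast hrel hf, smul_zero, zero_add,
    Finset.sum_congr rfl fun j _ => hN.apply_some_eq_smul_last hM hR hRlast hf j 0] at hrow

theorem sum_smul_armVector_eq_zero (hN : IsStarMatrix N s M)
    (hR : ∀ j, M j *ᵥ R j = fun i => if i = 0 then -p else 0) {c : Fin m → Q}
    (hc : ∀ j, p • c j = 0) (hsum : ∑ j, R j 0 • c j = 0) (x : StarVertex ℓ) :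
    ∑ y, N x y • armVector R c y = 0 := by
  rcases x with _ | ⟨j, i⟩
  · simpa [hN.sum_smul_none, armVector] using hsum
  · rw [hN.sum_smul_some]
    simp only [armVector, Matrix.sum_smul_smul_eq_mulVec_smul, hR]
    split_ifs <;> simp [hc]

def kernelEquiv (hN : IsStarMatrix N s M)
    (hM : ∀ j, (M j).IsUnitUpperHessenberg)
    (hR : ∀ j, M j *ᵥ R j = fun i => if i = 0 then -p else 0)
    (hRlast : ∀ j, R j (Fin.last (ℓ j)) = 1) (hrel : p * s - ∑ j, R j 0 = 1) :
    {f : StarVertex ℓ → Q // ∀ x, ∑ y, N x y • f y = 0} ≃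
      {c : Fin m → Q // (∀ j, p • c j = 0) ∧ ∑ j, R j 0 • c j = 0} where
  toFun f := ⟨fun j => f.1 (some ⟨j, Fin.last (ℓ j)⟩),
    fun j => congrFun (hN.smul_eq_zero_of_sum_smul_eq_zero hM hR hRlast hrel f.2) _,
    hN.sum_smul_last_eq_zero hM hR hRlast hrel f.2⟩
  invFun c := ⟨armVector R c.1, hN.sum_smul_armVector_eq_zero hR c.2.1 c.2.2⟩
  left_inv f := Subtype.ext (hN.eq_armVector hM hR hRlast hrel f.2).symm
  right_inv c := Subtype.ext <| funext fun j => by simp [armVector, hRlast]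

end IsStarMatrix

theorem LinearMap.card_quotient_range_eq_card_ker {R M : Type*} [Ring R] [AddCommGroup M]
    [Module R M] [Finite M] (f : M →ₗ[R] M) :
    Nat.card (M ⧸ LinearMap.range f) = Nat.card (LinearMap.ker f) :=
  AddSubgroup.index_range (f := f.toAddMonoidHom)

theorem Matrix.smul_mem_range_mulVecLin {ι : Type*} [Fintype ι] [DecidableEq ι]
    (A : Matrix ι ι ℤ) (p : ℤ)
    (h : ∀ f : ι → (ι → ℤ) ⧸ LinearMap.range A.mulVecLin,
      (∀ x, ∑ y, Aᵀ x y • f y = 0) → p • f = 0)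
    (v : ι → ℤ) : p • v ∈ LinearMap.range A.mulVecLin := by
  set q := (LinearMap.range A.mulVecLin).mkQ
  have hcols : ∀ x, ∑ y, Aᵀ x y • q (Pi.single y 1) = 0 := fun x => by
    have hcol : ∑ y, Aᵀ x y • Pi.single y 1 = A.mulVecLin (Pi.single x 1) := by
      ext z
      simp [Pi.single_apply]
    simp_rw [← map_zsmul q, ← map_sum q, hcol]
    exact (Submodule.Quotient.mk_eq_zero _).mpr (LinearMap.mem_range_self _ _)
  have hq : p • q = 0 := (Pi.basisFun ℤ ι).ext fun y => by
    simpa using congrFun (h _ hcols) y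
  rw [← Submodule.Quotient.mk_eq_zero, Submodule.Quotient.mk_smul]
  exact LinearMap.congr_fun hq v

theorem Matrix.card_quotient_range_mulVecLin {ι : Type*} [Fintype ι] [DecidableEq ι]
    (A : Matrix ι ι ℤ) (p : ℕ) [NeZero p]
    (hA : ∀ v, (p : ℤ) • v ∈ LinearMap.range A.mulVecLin) :
    Nat.card ((ι → ℤ) ⧸ LinearMap.range A.mulVecLin) =
      Nat.card {f : ι → ZMod p // ∀ x, ∑ y, A x y • f y = 0} := by
  set π : (ι → ℤ) →ₗ[ℤ] ι → ZMod p := (Int.castAddHom (ZMod p)).toIntLinearMap.compLeft ι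
  set Ap : (ι → ZMod p) →ₗ[ℤ] ι → ZMod p :=
    (A.map (Int.cast : ℤ → ZMod p)).mulVecLin.restrictScalars ℤ
  have hπ : Function.Surjective π := ZMod.intCast_surjective.comp_left
  have hker : LinearMap.ker π ≤ LinearMap.range A.mulVecLin := fun v hv => by
    have hdvd x : (p : ℤ) ∣ v x := (ZMod.intCast_zmod_eq_zero_iff_dvd _ _).mp (congrFun hv x)
    rw [show v = (p : ℤ) • fun x => v x / p from
      funext fun x => (Int.mul_ediv_cancel' (hdvd x)).symm]
    exact hA _
  have hrange : LinearMap.range Ap = (LinearMap.range A.mulVecLin).map π := by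
    rw [← LinearMap.range_comp, ← LinearMap.range_comp_of_range_eq_top Ap
      (LinearMap.range_eq_top.mpr hπ)]
    congr 1
    refine LinearMap.ext fun v => funext fun x => ?_
    exact (RingHom.map_mulVec (Int.castRingHom (ZMod p)) A v x).symm
  have hkerφ : LinearMap.ker ((LinearMap.range Ap).mkQ ∘ₗ π) = LinearMap.range A.mulVecLin := by
    rw [LinearMap.ker_comp, Submodule.ker_mkQ, hrange, Submodule.comap_map_eq,
      sup_eq_left.mpr hker]
  calc Nat.card ((ι → ℤ) ⧸ LinearMap.range A.mulVecLin)
      = Nat.card ((ι → ZMod p) ⧸ LinearMap.range Ap) :=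
        Nat.card_congr ((Submodule.quotEquivOfEq _ _ hkerφ.symm).trans
          (LinearMap.quotKerEquivOfSurjective _
            ((LinearMap.range Ap).mkQ_surjective.comp hπ))).toEquiv
    _ = Nat.card (LinearMap.ker Ap) := Ap.card_quotient_range_eq_card_ker
    _ = _ := Nat.card_congr <| Equiv.subtypeEquivRight fun f => by
        simp [Ap, funext_iff, Matrix.mulVec, dotProduct, zsmul_eq_mul]

theorem card_sum_mul_eq_zero {S ι : Type*} [CommRing S] [Fintype S] [Fintype ι] (b : ι → S)
    (hb : IsUnit (∑ i, b i)) :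
    Nat.card {c : ι → S // ∑ i, b i * c i = 0} = Nat.card S ^ (Nat.card ι - 1) := by
  set L := Fintype.linearCombination S b
  have hL : Function.Surjective L := fun y => by
    obtain ⟨u, hu⟩ := hb.exists_left_inv
    refine ⟨fun _ => u * y, ?_⟩
    rw [Fintype.linearCombination_apply, ← Finset.smul_sum, smul_eq_mul, mul_right_comm, hu,
      one_mul]
  have hcard : Nat.card (LinearMap.ker L) * Nat.card S = Nat.card S ^ Nat.card ι := by
    rw [← Nat.card_fun, Submodule.card_eq_card_quotient_mul_card (LinearMap.ker L),
      Nat.card_congr (L.quotKerEquivOfSurjective hL).toEquiv]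
  rw [Nat.card_congr (Equiv.subtypeEquivRight fun c => by
    simp [L, Fintype.linearCombination_apply, mul_comm] : _ ≃ LinearMap.ker L)]
  rcases Nat.eq_zero_or_pos (Nat.card ι) with h | h
  · rw [h, pow_zero] at hcard ⊢
    exact Nat.eq_one_of_mul_eq_one_right hcard
  · rw [← Nat.sub_add_cancel h, pow_succ] at hcard
    exact Nat.eq_of_mul_eq_mul_right Nat.card_pos hcard

theorem star_shaped_killed_by_p_general
    (m : ℕ)
    (ℓ : Fin m → ℕ)
    (M : ∀ j : Fin m, Matrix (Fin (ℓ j + 1)) (Fin (ℓ j + 1)) ℤ)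
    (hMadj : ∀ (j : Fin m) (i i' : Fin (ℓ j + 1)),
      ((i : ℕ) + 1 = (i' : ℕ) ∨ (i' : ℕ) + 1 = (i : ℕ)) → M j i i' = 1)
    (hMoff : ∀ (j : Fin m) (i i' : Fin (ℓ j + 1)),
      i ≠ i' → (i : ℕ) + 1 ≠ (i' : ℕ) → (i' : ℕ) + 1 ≠ (i : ℕ) → M j i i' = 0)
    (a : Fin m → ℤ)
    (R : ∀ j : Fin m, Fin (ℓ j + 1) → ℤ)
    (hRlast : ∀ j, R j (Fin.last (ℓ j)) = 1)
    (hRrel : ∀ j, (M j).mulVec (R j) = fun i => if i = 0 then -(a j) else 0)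
    (s₀ : ℤ)
    (N : Matrix (Option ((j : Fin m) × Fin (ℓ j + 1)))
                (Option ((j : Fin m) × Fin (ℓ j + 1))) ℤ)
    (hN₀ : N none none = -s₀)
    (hN₁ : ∀ (j : Fin m) (i : Fin (ℓ j + 1)),
      N none (some ⟨j, i⟩) = if i = 0 then 1 else 0)
    (hN₂ : ∀ (j : Fin m) (i : Fin (ℓ j + 1)),
      N (some ⟨j, i⟩) none = if i = 0 then 1 else 0)
    (hN₃ : ∀ (j : Fin m) (i i' : Fin (ℓ j + 1)),
      N (some ⟨j, i⟩) (some ⟨j, i'⟩) = M j i i')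
    (hN₄ : ∀ (j j' : Fin m) (i : Fin (ℓ j + 1)) (i' : Fin (ℓ j' + 1)),
      j ≠ j' → N (some ⟨j, i⟩) (some ⟨j', i'⟩) = 0)
    (p : ℕ) (hp : 2 ≤ p)
    (hap : ∀ j, a j = (p : ℤ))
    (hrel : (p : ℤ) * s₀ - ∑ j, R j 0 = 1) :
    (∀ x : (Option ((j : Fin m) × Fin (ℓ j + 1)) → ℤ) ⧸ LinearMap.range N.mulVecLin,
      (p : ℤ) • x = 0) ∧
    Nat.card ((Option ((j : Fin m) × Fin (ℓ j + 1)) → ℤ) ⧸ LinearMap.range N.mulVecLin) =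
      p ^ (m - 1) := by
  have hM j := Matrix.isUnitUpperHessenberg_of_tridiagonal (hMadj j) (hMoff j)
  have hR j : M j *ᵥ R j = fun i => if i = 0 then -(p : ℤ) else 0 := by rw [hRrel, hap]
  have hN : IsStarMatrix N s₀ M := ⟨hN₀, hN₁, hN₂, hN₃, hN₄⟩
  have hNt : IsStarMatrix Nᵀ s₀ M := by
    simpa only [fun j => (Matrix.isSymm_of_tridiagonal (hMadj j) (hMoff j)).eq]
      using hN.transpose
  have hkill := N.smul_mem_range_mulVecLin (p : ℤ) fun f hf =>
    hNt.smul_eq_zero_of_sum_smul_eq_zero hM hR hRlast hrel hf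
  refine ⟨fun x => ?_, ?_⟩
  · obtain ⟨v, rfl⟩ := Submodule.Quotient.mk_surjective _ x
    rw [← Submodule.Quotient.mk_smul, Submodule.Quotient.mk_eq_zero]
    exact hkill v
  have : NeZero p := ⟨by omega⟩
  have hsum : ∑ j, ((R j 0 : ℤ) : ZMod p) = -1 := by
    rw [← Int.cast_sum, show ∑ j, R j 0 = p * s₀ - 1 by linarith]
    simp
  calc Nat.card ((Option ((j : Fin m) × Fin (ℓ j + 1)) → ℤ) ⧸ LinearMap.range N.mulVecLin)
      = Nat.card {c : Fin m → ZMod p // (∀ j, (p : ℤ) • c j = 0) ∧ ∑ j, R j 0 • c j = 0} := by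
        rw [N.card_quotient_range_mulVecLin p hkill]
        exact Nat.card_congr (hN.kernelEquiv hM hR hRlast hrel)
    _ = Nat.card {c : Fin m → ZMod p // ∑ j, ((R j 0 : ℤ) : ZMod p) * c j = 0} :=
        Nat.card_congr <| Equiv.subtypeEquivRight fun c => by simp [zsmul_eq_mul]
    _ = p ^ (m - 1) := by
        rw [card_sum_mul_eq_zero _ (by rw [hsum]; exact isUnit_one.neg), Nat.card_zmod,
          Nat.card_fin]

/-- **Star-shaped intersection matrices: equal chains case.**
Let `N = N(s₀ | a₁/b₁, …, a_m/b_m)` be a star-shaped intersection matrix and `p ≥ 2` an integer.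
If `a_j = p` for all `j` and `p·s₀ − Σ b_j = 1`, then the discriminant group `Φ_N` is killed by
`p` and has order `p^{m−1}`. -/
theorem star_shaped_killed_by_p
    (m : ℕ) (hm : 3 ≤ m)
    (ℓ : Fin m → ℕ)
    (M : ∀ j : Fin m, Matrix (Fin (ℓ j + 1)) (Fin (ℓ j + 1)) ℤ)
    (hMdiag : ∀ j i, M j i i ≤ -2)
    (hMadj : ∀ (j : Fin m) (i i' : Fin (ℓ j + 1)),
      ((i : ℕ) + 1 = (i' : ℕ) ∨ (i' : ℕ) + 1 = (i : ℕ)) → M j i i' = 1)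
    (hMoff : ∀ (j : Fin m) (i i' : Fin (ℓ j + 1)),
      i ≠ i' → (i : ℕ) + 1 ≠ (i' : ℕ) → (i' : ℕ) + 1 ≠ (i : ℕ) → M j i i' = 0)
    (a : Fin m → ℤ) (ha : ∀ j, 1 ≤ a j)
    (R : ∀ j : Fin m, Fin (ℓ j + 1) → ℤ)
    (hRpos : ∀ j i, 0 < R j i)
    (hRlast : ∀ j, R j (Fin.last (ℓ j)) = 1)
    (hRrel : ∀ j, (M j).mulVec (R j) = fun i => if i = 0 then -(a j) else 0)
    (s₀ : ℤ) (hs₀ : 1 ≤ s₀)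
    (N : Matrix (Option ((j : Fin m) × Fin (ℓ j + 1)))
                (Option ((j : Fin m) × Fin (ℓ j + 1))) ℤ)
    (hN₀ : N none none = -s₀)
    (hN₁ : ∀ (j : Fin m) (i : Fin (ℓ j + 1)),
      N none (some ⟨j, i⟩) = if i = 0 then 1 else 0)
    (hN₂ : ∀ (j : Fin m) (i : Fin (ℓ j + 1)),
      N (some ⟨j, i⟩) none = if i = 0 then 1 else 0)
    (hN₃ : ∀ (j : Fin m) (i i' : Fin (ℓ j + 1)),
      N (some ⟨j, i⟩) (some ⟨j, i'⟩) = M j i i')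
    (hN₄ : ∀ (j j' : Fin m) (i : Fin (ℓ j + 1)) (i' : Fin (ℓ j' + 1)),
      j ≠ j' → N (some ⟨j, i⟩) (some ⟨j', i'⟩) = 0)
    (hNdef : ∀ v : Option ((j : Fin m) × Fin (ℓ j + 1)) → ℚ, v ≠ 0 →
      v ⬝ᵥ (N.map (Int.cast : ℤ → ℚ)).mulVec v < 0)
    (p : ℕ) (hp : 2 ≤ p)
    (hap : ∀ j, a j = (p : ℤ))
    (hrel : (p : ℤ) * s₀ - ∑ j, R j 0 = 1) :
    (∀ x : (Option ((j : Fin m) × Fin (ℓ j + 1)) → ℤ) ⧸ LinearMap.range N.mulVecLin,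
      (p : ℤ) • x = 0) ∧
    Nat.card ((Option ((j : Fin m) × Fin (ℓ j + 1)) → ℤ) ⧸ LinearMap.range N.mulVecLin) =
      p ^ (m - 1) :=
  star_shaped_killed_by_p_general m ℓ M hMadj hMoff a R hRlast hRrel s₀ N hN₀ hN₁ hN₂ hN₃ hN₄ p hp
    hap hrel
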